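/- Let F(Θ) = ∑_{i=1}^n f_i(θ_i) where each f_i : ℝ^d → ℝ is α-strongly convex and β-smooth, and let W be a gossip matrix with largest eigenvalue λ₁(W) and smallest nonzero eigenvalue λ_{n-1}(W). Then the dual function λ ↦ F*(λ√W), restricted to the image of √W⊗I_d, is (λ_{n-1}(W)/β)-strongly convex and (λ₁(W)/α)-smooth; hence its condition number is at most κ_l/γ where κ_l = β/α and γ = λ_{n-1}(W)/λ₁(W). -/

import Mathlib

/-!
The conjugate `F*` is `1/β`-strongly convex, because testing its supremum at points moved along
`(y₁ - y₂)/β` and using the `β`-smoothness of `F` gains the term `‖y₁ - y₂‖²/(2β)`; it is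
`1/α`-smooth, because `α`-strong convexity of `F` and Young's inequality
`⟪v, w⟫ ≤ α/2 ‖w‖² + ‖v‖²/(2α)` bound the loss in the opposite direction. Composing with
`S = √W ⊗ I_d` multiplies these moduli by the Rayleigh bounds of `W = SᵀS`: the upper bound holds
everywhere, and the lower bound holds on the image of `S`, whose block sums vanish since `S𝟙 = 0`.
-/

open Matrix Set
open scoped RealInnerProductSpace

section InnerProductSpace

variable {E : Type*} [NormedAddCommGroup E] [InnerProductSpace ℝ E]

lemma inner_sub_half_mul_sq_norm_le {m : ℝ} (hm : 0 < m) (y x : E) :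
    ⟪y, x⟫ - m / 2 * ‖x‖ ^ 2 ≤ m⁻¹ / 2 * ‖y‖ ^ 2 := by
  have key : m⁻¹ / 2 * ‖y‖ ^ 2 - (⟪y, x⟫ - m / 2 * ‖x‖ ^ 2) = m / 2 * ‖m⁻¹ • y - x‖ ^ 2 := by
    rw [norm_sub_sq_real, norm_smul, real_inner_smul_left, Real.norm_of_nonneg (by positivity)]
    field_simp
    ring
  nlinarith [sq_nonneg ‖m⁻¹ • y - x‖]

lemma convexOn_half_mul_sq_norm_sub_iff {s : Set E} {L : ℝ} {g : E → ℝ} :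
    ConvexOn ℝ s (fun x => L / 2 * ‖x‖ ^ 2 - g x) ↔ Convex ℝ s ∧
      ∀ ⦃x⦄, x ∈ s → ∀ ⦃y⦄, y ∈ s → ∀ ⦃a b : ℝ⦄, 0 ≤ a → 0 ≤ b → a + b = 1 →
        a * g x + b * g y ≤ g (a • x + b • y) + a * b * (L / 2 * ‖x - y‖ ^ 2) := by
  have h := strongConvexOn_iff_convex (s := s) (m := -L) (f := -g)
  simp only [Pi.neg_apply, neg_div, neg_mul, sub_neg_eq_add, neg_add_eq_sub] at h
  rw [← h]
  refine and_congr_right fun _ => forall₄_congr fun x _ y _ => forall₅_congr fun a b _ _ _ => ?_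
  simp only [Pi.neg_apply, smul_eq_mul]
  constructor <;> intro h <;> linarith

lemma ConvexOn.exists_inner_add_le [FiniteDimensional ℝ E] {g : E → ℝ}
    (hg : ConvexOn ℝ univ g) : ∃ z : E, ∃ c : ℝ, ∀ x, ⟪z, x⟫ + c ≤ g x := by
  have hcont : LowerSemicontinuousOn g univ :=
    (hg.continuousOn isOpen_univ).lowerSemicontinuousOn
  obtain ⟨l, c, hl, -⟩ := hg.exists_affine_le_of_lt (𝕜 := ℝ) (mem_univ (0 : E))
    (sub_one_lt (g 0)) isClosed_univ hcont
  refine ⟨(InnerProductSpace.toDual ℝ E).symm l, c, fun x => ?_⟩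
  rw [InnerProductSpace.toDual_symm_apply]
  simpa using hl ⟨x, mem_univ x⟩

lemma StrongConvexOn.bddAbove_range_inner_sub [FiniteDimensional ℝ E] {m : ℝ} {f : E → ℝ}
    (hm : 0 < m) (hf : StrongConvexOn univ m f) (y : E) :
    BddAbove (range fun x => ⟪y, x⟫ - f x) := by
  obtain ⟨z, c, hzc⟩ := (strongConvexOn_iff_convex.mp hf).exists_inner_add_le
  refine ⟨m⁻¹ / 2 * ‖y - z‖ ^ 2 - c, ?_⟩
  rintro _ ⟨x, rfl⟩
  have := inner_sub_half_mul_sq_norm_le hm (y - z) x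
  rw [inner_sub_left] at this
  linarith [hzc x]

-- `⨆` of a family unbounded above is `0` in `ℝ`, hence the `BddAbove` hypotheses below.
noncomputable def fenchelConj (f : E → ℝ) (y : E) : ℝ :=
  ⨆ x, ⟪y, x⟫ - f x

lemma inner_sub_le_fenchelConj {f : E → ℝ} {y : E}
    (hf : BddAbove (range fun x => ⟪y, x⟫ - f x)) (x : E) :
    ⟪y, x⟫ - f x ≤ fenchelConj f y :=
  le_ciSup hf x

lemma strongConvexOn_fenchelConj {β : ℝ} {f : E → ℝ} (hβ : 0 < β)
    (hf : ConvexOn ℝ univ (fun x => β / 2 * ‖x‖ ^ 2 - f x))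
    (hbdd : ∀ y, BddAbove (range fun x => ⟪y, x⟫ - f x)) :
    StrongConvexOn univ β⁻¹ (fenchelConj f) := by
  refine ⟨convex_univ, fun y₁ _ y₂ _ a b ha hb hab => ?_⟩
  simp only [smul_eq_mul]
  refine ciSup_le fun x => ?_
  -- `x₁ = x + b u` and `x₂ = x - a u` have `a, b`-mean `x` and difference `u`
  set u := β⁻¹ • (y₁ - y₂)
  obtain rfl : b = 1 - a := by linarith
  have hs := (convexOn_half_mul_sq_norm_sub_iff.mp hf).2 (mem_univ (x + (1 - a) • u))
    (mem_univ (x - a • u)) ha hb hab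
  rw [show a • (x + (1 - a) • u) + (1 - a) • (x - a • u) = x by module,
    show x + (1 - a) • u - (x - a • u) = u by module] at hs
  have h₁ := mul_le_mul_of_nonneg_left (inner_sub_le_fenchelConj (hbdd y₁) (x + (1 - a) • u)) ha
  have h₂ := mul_le_mul_of_nonneg_left (inner_sub_le_fenchelConj (hbdd y₂) (x - a • u)) hb
  have hu : ⟪y₁, u⟫ - ⟪y₂, u⟫ = β⁻¹ * ‖y₁ - y₂‖ ^ 2 := by
    rw [← inner_sub_left, real_inner_smul_right, real_inner_self_eq_norm_sq]
  have hu' : β * ‖u‖ ^ 2 = β⁻¹ * ‖y₁ - y₂‖ ^ 2 := by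
    rw [norm_smul, mul_pow, Real.norm_of_nonneg (by positivity)]
    field_simp
  simp only [inner_add_left, inner_add_right, inner_sub_right, real_inner_smul_left,
    real_inner_smul_right] at h₁ h₂ ⊢
  nlinarith [mul_nonneg ha hb]

lemma convexOn_half_mul_sq_norm_sub_fenchelConj {α : ℝ} {f : E → ℝ} (hα : 0 < α)
    (hf : StrongConvexOn univ α f) (hbdd : ∀ y, BddAbove (range fun x => ⟪y, x⟫ - f x)) :
    ConvexOn ℝ univ (fun y => α⁻¹ / 2 * ‖y‖ ^ 2 - fenchelConj f y) := by
  rw [convexOn_half_mul_sq_norm_sub_iff]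
  refine ⟨convex_univ, fun y₁ _ y₂ _ a b ha hb hab => ?_⟩
  rw [fenchelConj, fenchelConj, Real.mul_iSup_of_nonneg ha, Real.mul_iSup_of_nonneg hb]
  refine ciSup_add_ciSup_le fun x₁ x₂ => ?_
  have hs := hf.2 (mem_univ x₁) (mem_univ x₂) ha hb hab
  have hle := inner_sub_le_fenchelConj (hbdd (a • y₁ + b • y₂)) (a • x₁ + b • x₂)
  have hq := mul_le_mul_of_nonneg_left (inner_sub_half_mul_sq_norm_le hα (y₁ - y₂) (x₁ - x₂))
    (mul_nonneg ha hb)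
  have hinner : a * ⟪y₁, x₁⟫ + b * ⟪y₂, x₂⟫
      = ⟪a • y₁ + b • y₂, a • x₁ + b • x₂⟫ + a * b * ⟪y₁ - y₂, x₁ - x₂⟫ := by
    obtain rfl : b = 1 - a := by linarith
    simp only [inner_add_left, inner_add_right, inner_sub_left, inner_sub_right,
      real_inner_smul_left, real_inner_smul_right]
    ring
  simp only [smul_eq_mul] at hs
  nlinarith

end InnerProductSpace

section LinearMap

variable {E F : Type*} [NormedAddCommGroup E] [InnerProductSpace ℝ E]
  [NormedAddCommGroup F] [InnerProductSpace ℝ F] {g : F → ℝ} (A : E →ₗ[ℝ] F) {p : Submodule ℝ E}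

lemma StrongConvexOn.comp_linearMap_of_le_norm_sq {m c : ℝ} (hg : StrongConvexOn univ m g)
    (hm : 0 ≤ m) (hA : ∀ v ∈ p, c * ‖v‖ ^ 2 ≤ ‖A v‖ ^ 2) :
    StrongConvexOn p (c * m) (g ∘ A) := by
  refine ⟨p.convex, fun x hx y hy a b ha hb hab => ?_⟩
  have hs := hg.2 (mem_univ (A x)) (mem_univ (A y)) ha hb hab
  have hxy := mul_le_mul_of_nonneg_left (hA (x - y) (p.sub_mem hx hy))
    (mul_nonneg (mul_nonneg ha hb) hm)
  simp only [Function.comp_apply, map_add, map_smul, map_sub, smul_eq_mul] at hs hxy ⊢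
  nlinarith

lemma convexOn_half_mul_sq_norm_sub_comp_linearMap {L C : ℝ}
    (hg : ConvexOn ℝ univ (fun y => L / 2 * ‖y‖ ^ 2 - g y)) (hL : 0 ≤ L)
    (hA : ∀ v ∈ p, ‖A v‖ ^ 2 ≤ C * ‖v‖ ^ 2) :
    ConvexOn ℝ p (fun x => C * L / 2 * ‖x‖ ^ 2 - g (A x)) := by
  rw [convexOn_half_mul_sq_norm_sub_iff] at hg ⊢
  refine ⟨p.convex, fun x hx y hy a b ha hb hab => ?_⟩
  have hs := hg.2 (mem_univ (A x)) (mem_univ (A y)) ha hb hab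
  have hxy := mul_le_mul_of_nonneg_left (hA (x - y) (p.sub_mem hx hy))
    (mul_nonneg (mul_nonneg ha hb) hL)
  simp only [map_add, map_smul, map_sub] at hs hxy ⊢
  nlinarith

end LinearMap

section PiLp

variable {ι : Type*} [Fintype ι] {E : ι → Type*} [∀ i, NormedAddCommGroup (E i)]
  [∀ i, InnerProductSpace ℝ (E i)]

lemma convexOn_univ_piLp_sum {g : ∀ i, E i → ℝ} (hg : ∀ i, ConvexOn ℝ univ (g i)) :
    ConvexOn ℝ univ (fun X : PiLp 2 E => ∑ i, g i (X i)) := by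
  refine ⟨convex_univ, fun X _ Y _ a b ha hb hab => ?_⟩
  simp only [PiLp.add_apply, PiLp.smul_apply, smul_eq_mul, Finset.mul_sum,
    ← Finset.sum_add_distrib]
  exact Finset.sum_le_sum fun i _ => (hg i).2 (mem_univ _) (mem_univ _) ha hb hab

variable {f : ∀ i, E i → ℝ}

lemma StrongConvexOn.piLp_sum {m : ℝ} (hf : ∀ i, StrongConvexOn univ m (f i)) :
    StrongConvexOn univ m (fun X : PiLp 2 E => ∑ i, f i (X i)) := by
  rw [strongConvexOn_iff_convex]
  refine (convexOn_univ_piLp_sum fun i => strongConvexOn_iff_convex.mp (hf i)).congr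
    fun X _ => ?_
  simp only [PiLp.norm_sq_eq_of_L2, Finset.sum_sub_distrib, Finset.mul_sum]

lemma convexOn_half_mul_sq_norm_sub_piLp_sum {L : ℝ}
    (hf : ∀ i, ConvexOn ℝ univ (fun x => L / 2 * ‖x‖ ^ 2 - f i x)) :
    ConvexOn ℝ univ (fun X : PiLp 2 E => L / 2 * ‖X‖ ^ 2 - ∑ i, f i (X i)) := by
  refine (convexOn_univ_piLp_sum hf).congr fun X _ => ?_
  simp only [PiLp.norm_sq_eq_of_L2, Finset.sum_sub_distrib, Finset.mul_sum]

end PiLp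

namespace Matrix

variable {ι : Type*} [Fintype ι]

def piLpMulVec {R E : Type*} [CommSemiring R] [AddCommGroup E] [Module R E] (p : ENNReal)
    (M : Matrix ι ι R) : PiLp p (fun _ : ι => E) →ₗ[R] PiLp p (fun _ : ι => E) where
  toFun Λ := WithLp.toLp p fun i => ∑ j, M i j • Λ j
  map_add' Λ Λ' := by
    ext i
    simp only [WithLp.ofLp_add, Pi.add_apply, smul_add, Finset.sum_add_distrib]
  map_smul' c Λ := by
    ext i
    simp only [WithLp.ofLp_smul, Pi.smul_apply, Finset.smul_sum, smul_comm c, RingHom.id_apply]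

@[simp]
lemma piLpMulVec_apply {R E : Type*} [CommSemiring R] [AddCommGroup E] [Module R E]
    (p : ENNReal) (M : Matrix ι ι R) (Λ : PiLp p fun _ : ι => E) (i : ι) :
    M.piLpMulVec p Λ i = ∑ j, M i j • Λ j :=
  rfl

lemma sum_piLpMulVec_apply {R E : Type*} [CommSemiring R] [AddCommGroup E] [Module R E]
    (p : ENNReal) {M : Matrix ι ι R} (hM : ∀ j, ∑ i, M i j = 0) (Λ : PiLp p fun _ : ι => E) :
    ∑ i, M.piLpMulVec p Λ i = 0 := by
  simp only [piLpMulVec_apply]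
  rw [Finset.sum_comm]
  simp only [← Finset.sum_smul, hM, zero_smul, Finset.sum_const_zero]

variable {κ : Type*} (M : Matrix ι ι ℝ)

lemma piLpMulVec_apply_apply (Λ : PiLp 2 fun _ : ι => EuclideanSpace ℝ κ) (i : ι) (k : κ) :
    M.piLpMulVec 2 Λ i k = (M *ᵥ fun j => Λ j k) i := by
  simp [mulVec, dotProduct]

variable [Fintype κ]

lemma _root_.PiLp.norm_sq_eq_sum_sum_sq (Λ : PiLp 2 fun _ : ι => EuclideanSpace ℝ κ) :
    ‖Λ‖ ^ 2 = ∑ k, ∑ i, Λ i k ^ 2 := by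
  simp only [PiLp.norm_sq_eq_of_L2, Real.norm_eq_abs, sq_abs]
  exact Finset.sum_comm

lemma norm_piLpMulVec_sq (Λ : PiLp 2 fun _ : ι => EuclideanSpace ℝ κ) :
    ‖M.piLpMulVec 2 Λ‖ ^ 2 = ∑ k, (fun j => Λ j k) ⬝ᵥ ((Mᵀ * M) *ᵥ fun j => Λ j k) := by
  rw [PiLp.norm_sq_eq_sum_sum_sq]
  refine Finset.sum_congr rfl fun k _ => ?_
  rw [← mulVec_mulVec, dotProduct_mulVec, vecMul_transpose]
  simp only [piLpMulVec_apply_apply, dotProduct, sq]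

lemma norm_piLpMulVec_sq_le {C : ℝ} (hM : ∀ v, v ⬝ᵥ ((Mᵀ * M) *ᵥ v) ≤ C * ∑ i, v i ^ 2)
    (Λ : PiLp 2 fun _ : ι => EuclideanSpace ℝ κ) :
    ‖M.piLpMulVec 2 Λ‖ ^ 2 ≤ C * ‖Λ‖ ^ 2 := by
  rw [norm_piLpMulVec_sq, PiLp.norm_sq_eq_sum_sum_sq, Finset.mul_sum]
  exact Finset.sum_le_sum fun k _ => hM _

lemma le_norm_piLpMulVec_sq {c : ℝ}
    (hM : ∀ v, ∑ i, v i = 0 → c * ∑ i, v i ^ 2 ≤ v ⬝ᵥ ((Mᵀ * M) *ᵥ v))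
    {Λ : PiLp 2 fun _ : ι => EuclideanSpace ℝ κ} (hΛ : ∑ i, Λ i = 0) :
    c * ‖Λ‖ ^ 2 ≤ ‖M.piLpMulVec 2 Λ‖ ^ 2 := by
  rw [norm_piLpMulVec_sq, PiLp.norm_sq_eq_sum_sum_sq, Finset.mul_sum]
  refine Finset.sum_le_sum fun k _ => hM _ ?_
  simpa using congr($hΛ k)

end Matrix

theorem dual_condition_number_general {n d : ℕ}
    (f : Fin n → EuclideanSpace ℝ (Fin d) → ℝ) (α β : ℝ) (hα : 0 < α) (hβ : α ≤ β)
    (hsc : ∀ i, StrongConvexOn Set.univ α (f i))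
    (hsmooth : ∀ i, ConvexOn ℝ Set.univ (fun x => β / 2 * ‖x‖ ^ 2 - f i x))
    (W sqW : Matrix (Fin n) (Fin n) ℝ) (hsqW : sqW * sqW = W)
    (hsqWsymm : sqW.IsSymm)
    (hkerW : ∀ v : Fin n → ℝ, W.mulVec v = 0 ↔ ∃ c : ℝ, v = fun _ => c)
    (lam1 lamn1 : ℝ)
    (hspecUp : ∀ v : Fin n → ℝ, v ⬝ᵥ W.mulVec v ≤ lam1 * ∑ i, v i ^ 2)
    (hspecLow : ∀ v : Fin n → ℝ, (∑ i, v i) = 0 → lamn1 * ∑ i, v i ^ 2 ≤ v ⬝ᵥ W.mulVec v) :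
    let Fstar : (PiLp 2 fun _ : Fin n => EuclideanSpace ℝ (Fin d)) → ℝ :=
      fun Y => ⨆ X : PiLp 2 fun _ : Fin n => EuclideanSpace ℝ (Fin d),
        (∑ i, (inner ℝ (Y i) (X i) : ℝ)) - ∑ i, f i (X i)
    let mulSqW : (PiLp 2 fun _ : Fin n => EuclideanSpace ℝ (Fin d)) →
        (PiLp 2 fun _ : Fin n => EuclideanSpace ℝ (Fin d)) :=
      fun Λ => WithLp.toLp 2 (fun i => ∑ j, sqW j i • Λ j)
    let D : (PiLp 2 fun _ : Fin n => EuclideanSpace ℝ (Fin d)) → ℝ := fun Λ => Fstar (mulSqW Λ)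
    StrongConvexOn (Set.range mulSqW) (lamn1 / β) D ∧
    ConvexOn ℝ (Set.range mulSqW) (fun Λ => (lam1 / α) / 2 * ‖Λ‖ ^ 2 - D Λ) ∧
    (lam1 / α) / (lamn1 / β) = (β / α) / (lamn1 / lam1) := by
  intro Fstar mulSqW D
  set S := sqWᵀ.piLpMulVec 2 (E := EuclideanSpace ℝ (Fin d))
  have hD : D = fenchelConj (fun X => ∑ i, f i (X i)) ∘ S := rfl
  have hrange : Set.range mulSqW = LinearMap.range S := (LinearMap.coe_range S).symm
  have hgram : sqWᵀᵀ * sqWᵀ = W := by rw [transpose_transpose, hsqWsymm.eq, hsqW]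
  have hsqW_one : sqW *ᵥ (fun _ => 1) = 0 := by
    refine (conjTranspose_mul_self_mulVec_eq_zero sqW _).1 ?_
    rw [conjTranspose_eq_transpose_of_trivial, hsqWsymm.eq, hsqW]
    exact (hkerW _).2 ⟨1, rfl⟩
  have hsum : ∀ Λ ∈ LinearMap.range S, ∑ i, Λ i = 0 := by
    rintro _ ⟨Λ, rfl⟩
    refine sum_piLpMulVec_apply 2 (fun j => ?_) Λ
    simpa [mulVec, dotProduct] using congr_fun hsqW_one j
  have hβ' : 0 < β := hα.trans_le hβ
  have hF := StrongConvexOn.piLp_sum hsc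
  have hF' := convexOn_half_mul_sq_norm_sub_piLp_sum hsmooth
  have hbdd := hF.bddAbove_range_inner_sub hα
  refine ⟨?_, ?_, by simp only [div_eq_mul_inv, mul_inv, inv_inv]; ring⟩
  · rw [hD, hrange, div_eq_mul_inv]
    exact (strongConvexOn_fenchelConj hβ' hF' hbdd).comp_linearMap_of_le_norm_sq S
      (inv_nonneg.2 hβ'.le) fun v hv => le_norm_piLpMulVec_sq _ (hgram ▸ hspecLow) (hsum v hv)
  · rw [hrange, show lam1 / α = lam1 * α⁻¹ from div_eq_mul_inv _ _]
    exact convexOn_half_mul_sq_norm_sub_comp_linearMap S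
      (convexOn_half_mul_sq_norm_sub_fenchelConj hα hF hbdd) (inv_nonneg.2 hα.le)
      fun v _ => norm_piLpMulVec_sq_le _ (hgram ▸ hspecUp) v

/-- Let `F(Θ) = ∑ᵢ fᵢ(θᵢ)` with each `fᵢ` `α`-strongly convex and `β`-smooth, and let `W` be a
gossip matrix with largest eigenvalue `λ₁` and smallest nonzero eigenvalue `λₙ₋₁` (expressed by
Rayleigh-quotient bounds for its PSD square root `√W`).  Then the dual function
`Λ ↦ F*(Λ√W)`, restricted to the image of `√W ⊗ I_d`, is `(λₙ₋₁/β)`-strongly convex and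
`(λ₁/α)`-smooth; hence its condition number is at most `κ_l/γ = (β/α)/(λₙ₋₁/λ₁)`. -/
theorem dual_condition_number {n d : ℕ} (hn : 0 < n)
    (f : Fin n → EuclideanSpace ℝ (Fin d) → ℝ) (α β : ℝ) (hα : 0 < α) (hβ : α ≤ β)
    (hsc : ∀ i, StrongConvexOn Set.univ α (f i))
    (hsmooth : ∀ i, ConvexOn ℝ Set.univ (fun x => β / 2 * ‖x‖ ^ 2 - f i x))
    (W sqW : Matrix (Fin n) (Fin n) ℝ) (hW : W.PosSemidef) (hsqW : sqW * sqW = W)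
    (hsqWsymm : sqW.IsSymm)
    (hkerW : ∀ v : Fin n → ℝ, W.mulVec v = 0 ↔ ∃ c : ℝ, v = fun _ => c)
    (lam1 lamn1 : ℝ) (hlam : 0 < lamn1 ∧ lamn1 ≤ lam1)
    (hspecUp : ∀ v : Fin n → ℝ, v ⬝ᵥ W.mulVec v ≤ lam1 * ∑ i, v i ^ 2)
    (hspecLow : ∀ v : Fin n → ℝ, (∑ i, v i) = 0 → lamn1 * ∑ i, v i ^ 2 ≤ v ⬝ᵥ W.mulVec v) :
    let Fstar : (PiLp 2 fun _ : Fin n => EuclideanSpace ℝ (Fin d)) → ℝ :=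
      fun Y => ⨆ X : PiLp 2 fun _ : Fin n => EuclideanSpace ℝ (Fin d),
        (∑ i, (inner ℝ (Y i) (X i) : ℝ)) - ∑ i, f i (X i)
    let mulSqW : (PiLp 2 fun _ : Fin n => EuclideanSpace ℝ (Fin d)) →
        (PiLp 2 fun _ : Fin n => EuclideanSpace ℝ (Fin d)) :=
      fun Λ => WithLp.toLp 2 (fun i => ∑ j, sqW j i • Λ j)
    let D : (PiLp 2 fun _ : Fin n => EuclideanSpace ℝ (Fin d)) → ℝ := fun Λ => Fstar (mulSqW Λ)
    StrongConvexOn (Set.range mulSqW) (lamn1 / β) D ∧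
    ConvexOn ℝ (Set.range mulSqW) (fun Λ => (lam1 / α) / 2 * ‖Λ‖ ^ 2 - D Λ) ∧
    (lam1 / α) / (lamn1 / β) = (β / α) / (lamn1 / lam1) :=
  dual_condition_number_general f α β hα hβ hsc hsmooth W sqW hsqW hsqWsymm hkerW lam1 lamn1 hspecUp
    hspecLow
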